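/- arXiv:2603.13260 — 2 statements merged into one kernel-verified Lean document; each statement's English description precedes it below -/
import Mathlib

section
/- For strictly positive probability vectors P and Q on a finite set, the limit as β → 0⁺ of JSD(β)(P‖Q)/β equals KL(P‖Q). -/
/-- Kullback–Leibler divergence between probability vectors on a finite set. -/
noncomputable def klDiv {n : ℕ} (p q : Fin n → ℝ) : ℝ :=
  ∑ i, p i * Real.log (p i / q i)

/-- Generalized Jensen–Shannon divergence. -/
noncomputable def jsd {n : ℕ} (β : ℝ) (P Q : Fin n → ℝ) : ℝ :=
  β * klDiv P (fun i => β * P i + (1 - β) * Q i)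
    + (1 - β) * klDiv Q (fun i => β * P i + (1 - β) * Q i)

/-! Writing `M β = β • P + (1 - β) • Q`, we have
`JSD(β)/β = KL(P‖M β) + (1 - β) · KL(Q‖M β)/β`. The first term tends to `KL(P‖Q)` by
continuity. The second is a difference quotient at `0` of `β ↦ KL(Q‖M β)`, which vanishes at
`0` and has derivative `-∑ i, (P i - Q i) = 0` there, because `P` and `Q` have the same mass. -/

open Filter Topology

theorem klDiv_self {n : ℕ} (q : Fin n → ℝ) : klDiv q q = 0 := by
  simp [klDiv]

theorem continuousAt_klDiv_right {n : ℕ} (p : Fin n → ℝ) {q : Fin n → ℝ} (hq : ∀ i, q i ≠ 0) :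
    ContinuousAt (klDiv p) q := by
  refine tendsto_finsetSum _ fun i _ ↦ continuousAt_const.mul ?_
  by_cases hp : p i = 0
  · simp [hp, continuousAt_const]
  · exact (continuousAt_const.div (continuousAt_apply i q) (hq i)).log (div_ne_zero hp (hq i))

theorem HasDerivAt.klDiv_self_left {n : ℕ} {γ : ℝ → Fin n → ℝ} {v : Fin n → ℝ} {t : ℝ}
    (hγ : HasDerivAt γ v t) (hq : ∀ i, γ t i ≠ 0) :
    HasDerivAt (fun s ↦ klDiv (γ t) (γ s)) (-∑ i, v i) t := by
  rw [← Finset.sum_neg_distrib]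
  refine HasDerivAt.fun_sum fun i _ ↦ ?_
  have hγi : HasDerivAt (fun s ↦ γ s i) (v i) t := hasDerivAt_pi.mp hγ i
  refine ((((hasDerivAt_const t (γ t i)).fun_div hγi (hq i)).log (by simp [hq i])).const_mul
    (γ t i)).congr_deriv ?_
  field_simp [hq i]
  ring

theorem hasDerivAt_mixture {n : ℕ} (P Q : Fin n → ℝ) (t : ℝ) :
    HasDerivAt (fun β i ↦ β * P i + (1 - β) * Q i) (P - Q) t := by
  refine hasDerivAt_pi.mpr fun i ↦ ?_
  refine (((hasDerivAt_id' t).mul_const (P i)).fun_add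
    (((hasDerivAt_id' t).const_sub 1).mul_const (Q i))).congr_deriv ?_
  simp only [Pi.sub_apply]
  ring

theorem jsd_div_beta_tendsto_kl_general {n : ℕ} (P Q : Fin n → ℝ)
    (hQ0 : ∀ i, 0 < Q i)
    (hP1 : ∑ i, P i = 1) (hQ1 : ∑ i, Q i = 1) :
    Filter.Tendsto (fun β : ℝ => jsd β P Q / β)
      (nhdsWithin 0 (Set.Ioi 0)) (nhds (klDiv P Q)) := by
  set M : ℝ → Fin n → ℝ := fun β i ↦ β * P i + (1 - β) * Q i
  have hM : HasDerivAt M (P - Q) 0 := hasDerivAt_mixture P Q 0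
  have hM0 : M 0 = Q := by ext i; simp [M]
  have hM0_ne : ∀ i, M 0 i ≠ 0 := fun i ↦ hM0 ▸ (hQ0 i).ne'
  have hPM : Tendsto (fun β ↦ klDiv P (M β)) (𝓝 0) (𝓝 (klDiv P Q)) :=
    hM0 ▸ (continuousAt_klDiv_right P hM0_ne).comp hM.continuousAt
  have hQM : Tendsto (fun β ↦ klDiv Q (M β) / β) (𝓝[>] 0) (𝓝 0) := by
    have hderiv := hM.klDiv_self_left hM0_ne
    simp only [Pi.sub_apply, Finset.sum_sub_distrib, hP1, hQ1, sub_self, neg_zero, hM0] at hderiv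
    refine hderiv.tendsto_slope_zero_right.congr fun β ↦ ?_
    simp [hM0, klDiv_self, div_eq_inv_mul]
  have hsplit : ∀ β ≠ 0, klDiv P (M β) + (1 - β) * (klDiv Q (M β) / β) = jsd β P Q / β := by
    intro β hβ
    simp only [jsd, M]
    field_simp
  have hβ : Tendsto (fun β : ℝ ↦ 1 - β) (𝓝 0) (𝓝 1) :=
    (continuous_const.sub continuous_id).tendsto' 0 1 (sub_zero 1)
  have hlim := (hPM.mono_left nhdsWithin_le_nhds).add ((hβ.mono_left nhdsWithin_le_nhds).mul hQM)
  rw [mul_zero, add_zero] at hlim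
  exact hlim.congr' (eventually_nhdsWithin_of_forall fun β hβ ↦ hsplit β hβ.ne')

/-- For strictly positive probability vectors `P, Q`,
`JSD(β)(P‖Q)/β → KL(P‖Q)` as `β → 0⁺`. -/
theorem jsd_div_beta_tendsto_kl {n : ℕ} (P Q : Fin n → ℝ)
    (hP0 : ∀ i, 0 < P i) (hQ0 : ∀ i, 0 < Q i)
    (hP1 : ∑ i, P i = 1) (hQ1 : ∑ i, Q i = 1) :
    Filter.Tendsto (fun β : ℝ => jsd β P Q / β)
      (nhdsWithin 0 (Set.Ioi 0)) (nhds (klDiv P Q)) :=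
  jsd_div_beta_tendsto_kl_general P Q hQ0 hP1 hQ1
end

section
/- Let π be a permutation of {1,…,k} and z[1] ≥ z[2] ≥ … ≥ z[k] real scores sorted in descending order. The Plackett–Luce probability P_PL(π) with these scores is maximized over permutations when π is the identity, i.e., the ranking consistent with the descending order of scores. -/
open Finset in
/-- Plackett–Luce probability of a permutation `π` of `k` items with scores `z`. -/
noncomputable def plackettLuce {k : ℕ} (z : Fin k → ℝ) (π : Equiv.Perm (Fin k)) : ℝ :=
  ∏ j : Fin k, Real.exp (z (π j)) /
    ∑ ℓ ∈ Finset.univ.filter (fun ℓ => j ≤ ℓ), Real.exp (z (π ℓ))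

/-!
The numerator `∏ j, exp (z (π j))` does not depend on `π`. Each denominator is a tail sum
`∑ ℓ ≥ j, exp (z (π ℓ)) = ∑ ℓ, 1[j ≤ ℓ] * exp (z (π ℓ))`, and since the indicator increases while
`exp ∘ z` decreases, the rearrangement inequality makes it smallest at `π = 1`.
-/

open Finset

theorem Antitone.sum_Ici_le_sum_Ici_comp_perm {ι β : Type*} [LinearOrder ι] [Fintype ι]
    [LocallyFiniteOrderTop ι] [AddCommMonoid β] [LinearOrder β] [IsOrderedCancelAddMonoid β]
    {g : ι → β} (hg : Antitone g) (σ : Equiv.Perm ι) (j : ι) :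
    ∑ ℓ ∈ Ici j, g ℓ ≤ ∑ ℓ ∈ Ici j, g (σ ℓ) := by
  have hind : Monotone fun ℓ => if j ≤ ℓ then 1 else (0 : ℕ) := by
    intro a b hab
    dsimp only
    split_ifs with ha hb
    exacts [le_rfl, absurd (ha.trans hab) hb, zero_le_one, le_rfl]
  simpa [ite_smul, ← filter_le_eq_Ici, sum_filter] using
    (hind.antivary hg).sum_smul_le_sum_smul_comp_perm (σ := σ)

/-- For scores sorted in descending order, the Plackett–Luce probability is maximized by
the identity permutation (the ranking consistent with the descending order). -/
theorem plackettLuce_max_at_identity (k : ℕ) (z : Fin k → ℝ)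
    (hz : ∀ i j : Fin k, i ≤ j → z j ≤ z i) (π : Equiv.Perm (Fin k)) :
    plackettLuce z π ≤ plackettLuce z (1 : Equiv.Perm (Fin k)) := by
  have hexp : Antitone fun i => Real.exp (z i) := fun i j hij => Real.exp_le_exp.mpr (hz i j hij)
  have htail_pos (σ : Equiv.Perm (Fin k)) (j : Fin k) : 0 < ∑ ℓ ∈ Ici j, Real.exp (z (σ ℓ)) :=
    sum_pos (fun _ _ => Real.exp_pos _) ⟨j, mem_Ici.mpr le_rfl⟩
  unfold plackettLuce
  simp only [filter_le_eq_Ici, prod_div_distrib, Equiv.Perm.one_apply,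
    Equiv.prod_comp π fun i => Real.exp (z i)]
  exact div_le_div_of_nonneg_left (prod_nonneg fun _ _ => (Real.exp_pos _).le)
    (prod_pos fun j _ => htail_pos 1 j)
    (prod_le_prod (fun j _ => (htail_pos 1 j).le) fun j _ => hexp.sum_Ici_le_sum_Ici_comp_perm π j)
end
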